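/- arXiv:1408.2675 — 2 statements merged into one kernel-verified Lean document; each statement's English description precedes it below -/
import Mathlib

section
/- Fix an integer N ≥ 1, a real sequence (f_k)_{k≥0}, and weight parameters η_k ∈ [0,1). Let T̄_k be defined by T̄_0 = f_0, T̄_k = (1−η_{k−1}) f_k + η_{k−1} T̄_{k−1} for 1 ≤ k ≤ N−1, and T̄_k = Σ_{j=0}^{N−1} (η_{k−1}⋯η_{k−j})(1−η_{k−j−1}) f_{k−j} + (η_{k−1}⋯η_{k−N}) f_{k−N} for k ≥ N (empty product equal to 1), and set f_{l(k)} = max_{0≤j≤min(k,N)} f_{k−j}. Define the nonmonotone term by T_k = f_{l(k)} for 0 ≤ k ≤ N−1 and T_k = max{T̄_k, f_k} for k ≥ N. Then f_k ≤ T_k ≤ f_{l(k)} for all k ≥ 0. -/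
/-! For `k ≥ N`, `T̄_k` is a combination of `f_k, …, f_{k-N}` with the stick-breaking weights
`η_{k-1} ⋯ η_{k-j} (1 - η_{k-j-1})` and `η_{k-1} ⋯ η_{k-N}`; these are nonnegative and telescope
to `1`, so `T̄_k ≤ f_{l(k)}`. Everything else is immediate from `f_k ≤ f_{l(k)}`. -/

open Finset

theorem sum_prod_mul_one_sub_add_prod (c : ℕ → ℝ) (n : ℕ) :
    ∑ j ∈ range n, (∏ i ∈ range j, c i) * (1 - c j) + ∏ i ∈ range n, c i = 1 := by
  induction n with
  | zero => simp
  | succ n ih => rw [sum_range_succ, prod_range_succ]; linear_combination ih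

theorem sum_prod_mul_one_sub_mul_add_prod_mul_le {c a : ℕ → ℝ} {M : ℝ} {n : ℕ}
    (hc : ∀ i, c i ∈ Set.Icc (0 : ℝ) 1) (ha : ∀ j ≤ n, a j ≤ M) :
    ∑ j ∈ range n, (∏ i ∈ range j, c i) * (1 - c j) * a j + (∏ i ∈ range n, c i) * a n ≤ M := by
  have hprod : ∀ j, 0 ≤ ∏ i ∈ range j, c i := fun j => prod_nonneg fun i _ => (hc i).1
  calc ∑ j ∈ range n, (∏ i ∈ range j, c i) * (1 - c j) * a j + (∏ i ∈ range n, c i) * a n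
      ≤ ∑ j ∈ range n, (∏ i ∈ range j, c i) * (1 - c j) * M + (∏ i ∈ range n, c i) * M := by
        gcongr with j hj
        · exact mul_nonneg (hprod j) (sub_nonneg.2 (hc j).2)
        · exact ha j (mem_range.1 hj).le
        · exact hprod n
        · exact ha n le_rfl
    _ = M := by rw [← sum_mul, ← add_mul, sum_prod_mul_one_sub_add_prod, one_mul]

theorem le_sup'_range_sub (f : ℕ → ℝ) {k m j : ℕ} (hj : j ≤ m) :
    f (k - j) ≤ (range (m + 1)).sup' nonempty_range_add_one (fun j => f (k - j)) :=
  le_sup' (fun j => f (k - j)) (mem_range.2 (Nat.lt_succ_of_le hj))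

theorem fk_le_Tk_le_flk_general (N : ℕ) (f η : ℕ → ℝ)
    (hη : ∀ k, η k ∈ Set.Ico (0 : ℝ) 1)
    (Tbar T fl : ℕ → ℝ)
    (hfl : ∀ k, fl k =
      (Finset.range (min k N + 1)).sup' Finset.nonempty_range_add_one (fun j => f (k - j)))
    (hTsum : ∀ k, N ≤ k → Tbar k =
      (∑ j ∈ Finset.range N,
          (∏ i ∈ Finset.range j, η (k - 1 - i)) * (1 - η (k - j - 1)) * f (k - j))
        + (∏ i ∈ Finset.range N, η (k - 1 - i)) * f (k - N))
    (hTlt : ∀ k, k ≤ N - 1 → T k = fl k)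
    (hTge : ∀ k, N ≤ k → T k = max (Tbar k) (f k)) :
    ∀ k, f k ≤ T k ∧ T k ≤ fl k := by
  intro k
  have hfk : f k ≤ fl k := by simpa [hfl] using le_sup'_range_sub f (k := k) (Nat.zero_le (min k N))
  rcases le_or_gt k (N - 1) with hk | hk
  · rw [hTlt k hk]
    exact ⟨hfk, le_rfl⟩
  have hkN : N ≤ k := by omega
  have hTbar : Tbar k ≤ fl k := by
    rw [hTsum k hkN, hfl, min_eq_right hkN]
    simp only [Nat.sub_right_comm k _ 1]
    exact sum_prod_mul_one_sub_mul_add_prod_mul_le (fun i => Set.Ico_subset_Icc_self (hη _))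
      fun j hj => le_sup'_range_sub f hj
  rw [hTge k hkN]
  exact ⟨le_max_right _ _, max_le hTbar hfk⟩

/-- Lemma 1 for the nonmonotone term (11): with `f_{l(k)} = max_{0≤j≤min(k,N)} f_{k-j}`,
`T_k = f_{l(k)}` for `k ≤ N-1` and `T_k = max{T̄_k, f_k}` for `k ≥ N`, one has
`f_k ≤ T_k ≤ f_{l(k)}` for all `k ≥ 0`. -/
theorem fk_le_Tk_le_flk (N : ℕ) (hN : 1 ≤ N) (f η : ℕ → ℝ)
    (hη : ∀ k, η k ∈ Set.Ico (0 : ℝ) 1)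
    (Tbar T fl : ℕ → ℝ)
    (hfl : ∀ k, fl k =
      (Finset.range (min k N + 1)).sup' Finset.nonempty_range_add_one (fun j => f (k - j)))
    (hT0 : Tbar 0 = f 0)
    (hTrec : ∀ k, 1 ≤ k → k ≤ N - 1 →
      Tbar k = (1 - η (k - 1)) * f k + η (k - 1) * Tbar (k - 1))
    (hTsum : ∀ k, N ≤ k → Tbar k =
      (∑ j ∈ Finset.range N,
          (∏ i ∈ Finset.range j, η (k - 1 - i)) * (1 - η (k - j - 1)) * f (k - j))
        + (∏ i ∈ Finset.range N, η (k - 1 - i)) * f (k - N))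
    (hTlt : ∀ k, k ≤ N - 1 → T k = fl k)
    (hTge : ∀ k, N ≤ k → T k = max (Tbar k) (f k)) :
    ∀ k, f k ≤ T k ∧ T k ≤ fl k :=
  fk_le_Tk_le_flk_general N f η hη Tbar T fl hfl hTsum hTlt hTge
end

section
/- Fix an integer N ≥ 1 and a real sequence (f_k)_{k≥0}, and set f_{l(k)} = max_{0≤j≤min(k,N)} f_{k−j}. If f_{k+1} ≤ f_{l(k)} for all k ≥ 0, then the sequence (f_{l(k)})_{k≥0} is non-increasing, i.e., f_{l(k+1)} ≤ f_{l(k)} for all k ≥ 0. -/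
/-!
The window `{k + 1 - N, …, k + 1}` of step `k + 1` consists of the newest value `f (k + 1)`,
which is at most the reference value at step `k` by hypothesis, and of older values, which all
lie in the window `{k - N, …, k}` of step `k`.
-/

open Finset

section WindowMax

variable {α : Type*} [SemilatticeSup α]

/-- The reference value `f_{l(k)}` of Grippo, Lampariello and Lucidi. -/
def windowMax (N : ℕ) (f : ℕ → α) (k : ℕ) : α :=
  (range (min k N + 1)).sup' nonempty_range_add_one (fun j => f (k - j))

theorem le_windowMax {N k j : ℕ} (f : ℕ → α) (hj : j ≤ min k N) :
    f (k - j) ≤ windowMax N f k :=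
  le_sup' (fun j => f (k - j)) (mem_range.mpr (Nat.lt_succ_of_le hj))

theorem windowMax_succ_le {N k : ℕ} {f : ℕ → α} (hnew : f (k + 1) ≤ windowMax N f k) :
    windowMax N f (k + 1) ≤ windowMax N f k := by
  refine sup'_le _ _ fun j hj => ?_
  have hj : j ≤ min (k + 1) N := Nat.lt_succ_iff.mp (mem_range.mp hj)
  rcases j with _ | j
  · exact hnew
  · have hold : j ≤ min k N := by omega
    simpa only [Nat.add_sub_add_right] using le_windowMax f hold

end WindowMax

theorem flk_monotone_decreasing_general (N : ℕ) (f fl : ℕ → ℝ)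
    (hfl : ∀ k, fl k =
      (Finset.range (min k N + 1)).sup' Finset.nonempty_range_add_one (fun j => f (k - j)))
    (hdec : ∀ k, f (k + 1) ≤ fl k) :
    ∀ k, fl (k + 1) ≤ fl k := by
  obtain rfl : fl = windowMax N f := funext hfl
  exact fun k => windowMax_succ_le (hdec k)

/-- If `f_{k+1} ≤ f_{l(k)}` for all `k`, where
`f_{l(k)} = max_{0≤j≤min(k,N)} f_{k-j}` is the max-based nonmonotone term of
Grippo, Lampariello and Lucidi, then the sequence `(f_{l(k)})` is non-increasing. -/
theorem flk_monotone_decreasing (N : ℕ) (hN : 1 ≤ N) (f fl : ℕ → ℝ)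
    (hfl : ∀ k, fl k =
      (Finset.range (min k N + 1)).sup' Finset.nonempty_range_add_one (fun j => f (k - j)))
    (hdec : ∀ k, f (k + 1) ≤ fl k) :
    ∀ k, fl (k + 1) ≤ fl k :=
  flk_monotone_decreasing_general N f fl hfl hdec
end
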